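/- arXiv:1401.4316 — 5 statements merged into one kernel-verified Lean document; each statement's English description precedes it below -/
import Mathlib

section
/- Let n ≥ 3 and 0 ≤ s < (n-2)/2. There exists C_s > 1 such that for all u ∈ C_c^∞((0,∞)) and all δ ≥ 0: (1/C_s) ‖d/dr((r+δ)^{-s}u)‖ ≤ ‖(r+δ)^{-s} u'‖ ≤ C_s ‖d/dr((r+δ)^{-s}u)‖, where ‖·‖ denotes the norm of L²((0,∞), r^{n-1}dr). -/
set_option maxHeartbeats 1000000


open MeasureTheory Set intervalIntegral

/-- Cauchy–Schwarz for interval integrals of continuous real functions. -/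
lemma my_cs_interval {a b : ℝ} (hab : a ≤ b) {p q : ℝ → ℝ}
    (hp : ContinuousOn p (Icc a b)) (hq : ContinuousOn q (Icc a b)) :
    (∫ r in a..b, p r * q r) ≤
      Real.sqrt (∫ r in a..b, (p r)^2) * Real.sqrt (∫ r in a..b, (q r)^2) := by
  have hip : IntervalIntegrable (fun r => (p r)^2) volume a b :=
    (hp.pow 2).intervalIntegrable_of_Icc hab
  have hiq : IntervalIntegrable (fun r => (q r)^2) volume a b :=
    (hq.pow 2).intervalIntegrable_of_Icc hab
  have hipq : IntervalIntegrable (fun r => p r * q r) volume a b :=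
    (hp.mul hq).intervalIntegrable_of_Icc hab
  set P := ∫ r in a..b, (p r)^2 with hP
  set Q := ∫ r in a..b, (q r)^2 with hQ
  set R := ∫ r in a..b, p r * q r with hR
  have hP0 : 0 ≤ P := integral_nonneg hab fun x _ => sq_nonneg _
  have hQ0 : 0 ≤ Q := integral_nonneg hab fun x _ => sq_nonneg _
  have key : ∀ t : ℝ, 0 ≤ P * (t * t) + (2 * R) * t + Q := by
    intro t
    have h2 : (∫ r in a..b, ((t * p r + q r)^2)) = P * (t*t) + (2*R)*t + Q := by
      have hpt : ∀ r, (t * p r + q r)^2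
          = (t*t) * (p r)^2 + (2*t) * (p r * q r) + (q r)^2 := fun r => by ring
      simp_rw [hpt]
      rw [integral_add (((hip.const_mul _).add (hipq.const_mul _))) hiq,
        integral_add (hip.const_mul _) (hipq.const_mul _),
        intervalIntegral.integral_const_mul, intervalIntegral.integral_const_mul]
      ring
    rw [← h2]
    exact integral_nonneg hab fun x _ => sq_nonneg _
  have hd := discrim_le_zero key
  rw [discrim] at hd
  have hR2 : R^2 ≤ P * Q := by nlinarith
  calc R ≤ |R| := le_abs_self R
    _ = Real.sqrt (R^2) := (Real.sqrt_sq_eq_abs R).symm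
    _ ≤ Real.sqrt (P*Q) := Real.sqrt_le_sqrt hR2
    _ = Real.sqrt P * Real.sqrt Q := Real.sqrt_mul hP0 Q

/-- Minkowski inequality for weighted interval integrals of continuous functions. -/
lemma my_mink_interval {a b : ℝ} (hab : a ≤ b) {f g : ℝ → ℂ} {W : ℝ → ℝ}
    (hf : ContinuousOn f (Icc a b)) (hg : ContinuousOn g (Icc a b))
    (hW : ContinuousOn W (Icc a b)) (hW0 : ∀ r ∈ Icc a b, 0 ≤ W r) :
    Real.sqrt (∫ r in a..b, ‖f r + g r‖^2 * W r) ≤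
      Real.sqrt (∫ r in a..b, ‖f r‖^2 * W r)
        + Real.sqrt (∫ r in a..b, ‖g r‖^2 * W r) := by
  have huIcc : uIcc a b = Icc a b := uIcc_of_le hab
  set p : ℝ → ℝ := fun r => ‖f r‖ * Real.sqrt (W r) with hp_def
  set q : ℝ → ℝ := fun r => ‖g r‖ * Real.sqrt (W r) with hq_def
  have hWs : ContinuousOn (fun r => Real.sqrt (W r)) (Icc a b) :=
    Real.continuous_sqrt.comp_continuousOn hW
  have hpc : ContinuousOn p (Icc a b) := hf.norm.mul hWs
  have hqc : ContinuousOn q (Icc a b) := hg.norm.mul hWs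
  have e1 : (∫ r in a..b, ‖f r‖^2 * W r) = ∫ r in a..b, (p r)^2 := by
    refine integral_congr fun r hr => ?_
    rw [huIcc] at hr
    simp only [hp_def, mul_pow, Real.sq_sqrt (hW0 r hr)]
  have e2 : (∫ r in a..b, ‖g r‖^2 * W r) = ∫ r in a..b, (q r)^2 := by
    refine integral_congr fun r hr => ?_
    rw [huIcc] at hr
    simp only [hq_def, mul_pow, Real.sq_sqrt (hW0 r hr)]
  have hip : IntervalIntegrable (fun r => (p r)^2) volume a b :=
    (hpc.pow 2).intervalIntegrable_of_Icc hab
  have hiq : IntervalIntegrable (fun r => (q r)^2) volume a b :=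
    (hqc.pow 2).intervalIntegrable_of_Icc hab
  have hipq : IntervalIntegrable (fun r => p r * q r) volume a b :=
    (hpc.mul hqc).intervalIntegrable_of_Icc hab
  set P := ∫ r in a..b, (p r)^2 with hP
  set Q := ∫ r in a..b, (q r)^2 with hQ
  have hP0 : 0 ≤ P := integral_nonneg hab fun x _ => sq_nonneg _
  have hQ0 : 0 ≤ Q := integral_nonneg hab fun x _ => sq_nonneg _
  have hLsum : (∫ r in a..b, ‖f r + g r‖^2 * W r)
      ≤ ∫ r in a..b, ((p r)^2 + 2 * (p r * q r) + (q r)^2) := by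
    refine integral_mono_on hab ?_ ?_ ?_
    · exact (((hf.add hg).norm.pow 2).mul hW).intervalIntegrable_of_Icc hab
    · exact (((hip.add (hipq.const_mul _))).add hiq)
    · intro r hr
      have h2 : ‖f r + g r‖^2 ≤ (‖f r‖ + ‖g r‖)^2 :=
        pow_le_pow_left₀ (norm_nonneg _) (norm_add_le _ _) 2
      have h3 : ‖f r + g r‖^2 * W r ≤ (‖f r‖ + ‖g r‖)^2 * W r :=
        mul_le_mul_of_nonneg_right h2 (hW0 r hr)
      refine h3.trans_eq ?_
      have hw : Real.sqrt (W r) * Real.sqrt (W r) = W r := Real.mul_self_sqrt (hW0 r hr)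
      calc (‖f r‖ + ‖g r‖)^2 * W r
          = (‖f r‖^2 + 2*(‖f r‖*‖g r‖) + ‖g r‖^2) * (Real.sqrt (W r) * Real.sqrt (W r)) := by
            rw [hw]; ring
        _ = (p r)^2 + 2 * (p r * q r) + (q r)^2 := by simp only [hp_def, hq_def]; ring
  have hsum : (∫ r in a..b, ((p r)^2 + 2 * (p r * q r) + (q r)^2))
      = P + 2 * (∫ r in a..b, p r * q r) + Q := by
    rw [integral_add ((hip.add (hipq.const_mul _))) hiq,
      integral_add hip (hipq.const_mul _), intervalIntegral.integral_const_mul]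
  have hcs := my_cs_interval hab hpc hqc
  have hfin : (∫ r in a..b, ‖f r + g r‖^2 * W r) ≤ (Real.sqrt P + Real.sqrt Q)^2 := by
    have hPP : Real.sqrt P * Real.sqrt P = P := Real.mul_self_sqrt hP0
    have hQQ : Real.sqrt Q * Real.sqrt Q = Q := Real.mul_self_sqrt hQ0
    calc (∫ r in a..b, ‖f r + g r‖^2 * W r)
        ≤ P + 2 * (∫ r in a..b, p r * q r) + Q := hLsum.trans_eq hsum
      _ ≤ P + 2 * (Real.sqrt P * Real.sqrt Q) + Q := by linarith
      _ = (Real.sqrt P + Real.sqrt Q)^2 := by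
            rw [add_sq, Real.sq_sqrt hP0, Real.sq_sqrt hQ0]; ring
  rw [e1, e2]
  calc Real.sqrt (∫ r in a..b, ‖f r + g r‖^2 * W r)
      ≤ Real.sqrt ((Real.sqrt P + Real.sqrt Q)^2) := Real.sqrt_le_sqrt hfin
    _ = Real.sqrt P + Real.sqrt Q := Real.sqrt_sq (by positivity)



/-- Hardy inequality on an interval for functions vanishing at the endpoints. -/
lemma my_hardy_interval {ν a b : ℝ} (hν : 3 ≤ ν) (ha : 0 < a) (hab : a ≤ b)
    {v v' : ℝ → ℂ} (hd : ∀ r ∈ Icc a b, HasDerivAt v (v' r) r)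
    (hv' : ContinuousOn v' (Icc a b)) (hva : v a = 0) (hvb : v b = 0) :
    ((ν-2)/2)^2 * (∫ r in a..b, ‖v r‖^2 * r^(ν-3)) ≤ ∫ r in a..b, ‖v' r‖^2 * r^(ν-1) := by
  have huIcc : uIcc a b = Icc a b := uIcc_of_le hab
  have hv : ContinuousOn v (Icc a b) := fun r hr => (hd r hr).continuousAt.continuousWithinAt
  have hrpos : ∀ r ∈ Icc a b, (0:ℝ) < r := fun r hr => lt_of_lt_of_le ha hr.1
  have hrp : ∀ e : ℝ, ContinuousOn (fun r : ℝ => r ^ e) (Icc a b) := by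
    intro e r hr
    exact (Real.continuousAt_rpow_const r e (Or.inl (hrpos r hr).ne')).continuousWithinAt
  set c : ℝ := (ν-2)/2 with hc_def
  have hc : 0 < c := by rw [hc_def]; linarith
  set φ : ℝ → ℝ := fun r => (inner ℝ (v r) (v' r) : ℝ) with hφ_def
  have hφc : ContinuousOn φ (Icc a b) :=
    ContinuousOn.inner hv hv'
  set ψ₁ : ℝ → ℝ := fun r => ‖v r‖^2 * r^(ν-3) with hψ₁_def
  set ψ₂ : ℝ → ℝ := fun r => r^(ν-2) * φ r with hψ₂_def
  have hψ₁c : ContinuousOn ψ₁ (Icc a b) := (hv.norm.pow 2).mul (hrp _)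
  have hψ₂c : ContinuousOn ψ₂ (Icc a b) := (hrp _).mul hφc
  have hψ₁i : IntervalIntegrable ψ₁ volume a b := hψ₁c.intervalIntegrable_of_Icc hab
  have hψ₂i : IntervalIntegrable ψ₂ volume a b := hψ₂c.intervalIntegrable_of_Icc hab
  have hBi : IntervalIntegrable (fun r => ‖v' r‖^2 * r^(ν-1)) volume a b :=
    ((hv'.norm.pow 2).mul (hrp _)).intervalIntegrable_of_Icc hab
  set A := ∫ r in a..b, ψ₁ r with hA_def
  set B := ∫ r in a..b, ‖v' r‖^2 * r^(ν-1) with hB_def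
  -- Integration by parts
  have hF : ∀ r ∈ uIcc a b,
      HasDerivAt (fun t => t^(ν-2) * ‖v t‖^2) ((ν-2) * ψ₁ r + 2 * ψ₂ r) r := by
    intro r hr
    rw [huIcc] at hr
    have h1 : HasDerivAt (fun t : ℝ => t^(ν-2)) ((ν-2) * r^(ν-2-1)) r :=
      Real.hasDerivAt_rpow_const (Or.inl (hrpos r hr).ne')
    have h2 : HasDerivAt (fun t => ‖v t‖^2) (2 * (inner ℝ (v r) (v' r) : ℝ)) r :=
      (hd r hr).norm_sq
    have h3 := h1.mul h2
    refine h3.congr_deriv ?_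
    rw [show ν-2-1 = ν-3 by ring]
    simp only [hψ₁_def, hψ₂_def, hφ_def]
    ring
  have hFint : IntervalIntegrable (fun r => (ν-2) * ψ₁ r + 2 * ψ₂ r) volume a b :=
    (hψ₁i.const_mul _).add (hψ₂i.const_mul _)
  have hIBP : (∫ r in a..b, ((ν-2) * ψ₁ r + 2 * ψ₂ r)) = 0 := by
    rw [integral_eq_sub_of_hasDerivAt hF hFint, hva, hvb]
    simp
  have hI : (∫ r in a..b, ψ₂ r) = -((ν-2)/2 * A) := by
    rw [integral_add (hψ₁i.const_mul _) (hψ₂i.const_mul _),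
      intervalIntegral.integral_const_mul, intervalIntegral.integral_const_mul] at hIBP
    rw [hA_def]; linarith
  -- completing the square
  have hT0 : 0 ≤ ∫ r in a..b,
      ‖(r ^ ((ν-1)/2) : ℝ) • v' r + ((c * r ^ ((ν-3)/2)) : ℝ) • v r‖^2 :=
    integral_nonneg hab fun x _ => sq_nonneg _
  have hpt : ∀ r ∈ Icc a b,
      ‖(r ^ ((ν-1)/2) : ℝ) • v' r + ((c * r ^ ((ν-3)/2)) : ℝ) • v r‖^2
        = ‖v' r‖^2 * r^(ν-1) + c * (2 * ψ₂ r) + c^2 * ψ₁ r := by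
    intro r hr
    have hr0 : (0:ℝ) < r := hrpos r hr
    have e1 : r ^ ((ν-1)/2) * r ^ ((ν-1)/2) = r ^ (ν-1) := by
      rw [← Real.rpow_add hr0]; norm_num
    have e2 : r ^ ((ν-3)/2) * r ^ ((ν-3)/2) = r ^ (ν-3) := by
      rw [← Real.rpow_add hr0]; norm_num
    have e3 : r ^ ((ν-1)/2) * r ^ ((ν-3)/2) = r ^ (ν-2) := by
      rw [← Real.rpow_add hr0]; ring_nf
    have hn1 : (0:ℝ) ≤ r ^ ((ν-1)/2) := Real.rpow_nonneg hr0.le _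
    have hn2 : (0:ℝ) ≤ c * r ^ ((ν-3)/2) := mul_nonneg hc.le (Real.rpow_nonneg hr0.le _)
    rw [norm_add_sq_real, norm_smul, norm_smul, real_inner_smul_left, real_inner_smul_right]
    rw [Real.norm_eq_abs, Real.norm_eq_abs, abs_of_nonneg hn1, abs_of_nonneg hn2]
    have hsym : (inner ℝ (v' r) (v r) : ℝ) = φ r := real_inner_comm _ _
    rw [hsym]
    simp only [hψ₁_def, hψ₂_def]
    rw [← e1, ← e2, ← e3]
    ring
  have hTeq : (∫ r in a..b,
      ‖(r ^ ((ν-1)/2) : ℝ) • v' r + ((c * r ^ ((ν-3)/2)) : ℝ) • v r‖^2)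
      = B + c * (2 * ∫ r in a..b, ψ₂ r) + c^2 * A := by
    rw [integral_congr (g := fun r => ‖v' r‖^2 * r^(ν-1) + c * (2 * ψ₂ r) + c^2 * ψ₁ r)
      (fun r hr => hpt r (huIcc ▸ hr))]
    rw [integral_add (hBi.add ((hψ₂i.const_mul _).const_mul _)) (hψ₁i.const_mul _),
      integral_add hBi ((hψ₂i.const_mul _).const_mul _),
      intervalIntegral.integral_const_mul, intervalIntegral.integral_const_mul, intervalIntegral.integral_const_mul]
  rw [hTeq, hI] at hT0
  have : c * (2 * -((ν-2)/2 * A)) = -(2 * c^2 * A) := by rw [hc_def]; ring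
  nlinarith [hT0]



lemma my_ioi_to_interval {a b : ℝ} (ha : 0 < a) (hab : a ≤ b) {f : ℝ → ℝ}
    (hf : ∀ x, x ∉ Ioo a b → f x = 0) :
    ∫ x in Ioi (0:ℝ), f x = ∫ x in a..b, f x := by
  have h1 : ∀ x, f x = (Ioo a b).indicator f x := by
    intro x
    by_cases hx : x ∈ Ioo a b
    · rw [indicator_of_mem hx]
    · rw [indicator_of_notMem hx, hf x hx]
  calc ∫ x in Ioi (0:ℝ), f x = ∫ x in Ioi (0:ℝ), (Ioo a b).indicator f x :=
        integral_congr_ae (Filter.Eventually.of_forall fun x => h1 x)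
    _ = ∫ x in Ioi (0:ℝ) ∩ Ioo a b, f x := setIntegral_indicator measurableSet_Ioo
    _ = ∫ x in Ioo a b, f x := by
        rw [show Ioi (0:ℝ) ∩ Ioo a b = Ioo a b from
          inter_eq_self_of_subset_right (fun x hx => lt_trans ha hx.1)]
    _ = ∫ x in a..b, f x := by
        rw [intervalIntegral.integral_of_le hab, ← integral_Ioc_eq_integral_Ioo]


theorem shifted_weighted_norm_equivalence (n : ℕ) (hn : 3 ≤ n) (s : ℝ)
    (hs0 : 0 ≤ s) (hs : s < ((n : ℝ) - 2) / 2) :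
    ∃ C > 1, ∀ u : ℝ → ℂ, ContDiff ℝ (⊤ : ℕ∞) u → HasCompactSupport u → tsupport u ⊆ Set.Ioi 0 →
      ∀ δ : ℝ, 0 ≤ δ →
      C⁻¹ * (∫ r in Set.Ioi (0:ℝ),
              ‖deriv (fun x => (((x + δ) ^ (-s) : ℝ) : ℂ) * u x) r‖ ^ 2 * r ^ ((n : ℝ) - 1)) ^ ((1:ℝ)/2)
        ≤ (∫ r in Set.Ioi (0:ℝ),
              ‖(((r + δ) ^ (-s) : ℝ) : ℂ) * deriv u r‖ ^ 2 * r ^ ((n : ℝ) - 1)) ^ ((1:ℝ)/2)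
      ∧ (∫ r in Set.Ioi (0:ℝ),
              ‖(((r + δ) ^ (-s) : ℝ) : ℂ) * deriv u r‖ ^ 2 * r ^ ((n : ℝ) - 1)) ^ ((1:ℝ)/2)
        ≤ C * (∫ r in Set.Ioi (0:ℝ),
              ‖deriv (fun x => (((x + δ) ^ (-s) : ℝ) : ℂ) * u x) r‖ ^ 2 * r ^ ((n : ℝ) - 1)) ^ ((1:ℝ)/2) := by
  have hν : (3:ℝ) ≤ (n:ℝ) := by exact_mod_cast hn
  set ν : ℝ := (n:ℝ) with hν_def
  have hν2 : (1:ℝ) ≤ ν - 2 := by linarith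
  set θ : ℝ := 2*s/(ν-2) with hθ_def
  have hθ0 : 0 ≤ θ := div_nonneg (by linarith) (by linarith)
  have hθ1 : θ < 1 := by
    rw [hθ_def, div_lt_one (by linarith)]
    linarith
  refine ⟨2/(1-θ), by rw [gt_iff_lt, lt_div_iff₀ (by linarith)]; linarith, ?_⟩
  intro u hu hcpt hsupp δ hδ
  set v : ℝ → ℂ := fun x => (((x + δ) ^ (-s) : ℝ) : ℂ) * u x with hv_def
  -- interval containing the support
  obtain ⟨a, b, ha, hab, hKsub⟩ :
      ∃ a b : ℝ, 0 < a ∧ a ≤ b ∧ tsupport u ⊆ Ioo a b := by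
    set K' : Set ℝ := tsupport u ∪ Icc 1 2 with hK'
    have hK'c : IsCompact K' := hcpt.union isCompact_Icc
    have hK'ne : K'.Nonempty := ⟨1, Or.inr (by norm_num)⟩
    have hK'sub : K' ⊆ Ioi 0 := union_subset hsupp (fun x hx => lt_of_lt_of_le one_pos hx.1)
    have ha0 : 0 < sInf K' := hK'sub (hK'c.sInf_mem hK'ne)
    have hle : sInf K' ≤ sSup K' := hK'c.isLUB_sSup hK'ne |>.1 (hK'c.sInf_mem hK'ne)
    refine ⟨sInf K' / 2, sSup K' + 1, by linarith, by linarith, ?_⟩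
    intro x hx
    have h1 : sInf K' ≤ x := csInf_le hK'c.bddBelow (Or.inl hx)
    have h2 : x ≤ sSup K' := le_csSup hK'c.bddAbove (Or.inl hx)
    exact ⟨by linarith, by linarith⟩
  have hIccIoi : Icc a b ⊆ Ioi (0:ℝ) := fun x hx => lt_of_lt_of_le ha hx.1
  -- basic vanishing facts
  have hzero : ∀ x, x ∉ tsupport u →
      u x = 0 ∧ deriv u x = 0 ∧ v x = 0 ∧ deriv v x = 0 := by
    intro x hx
    have hmem : (tsupport u)ᶜ ∈ nhds x := (isClosed_tsupport u).isOpen_compl.mem_nhds hx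
    have hu0 : u =ᶠ[nhds x] (fun _ => (0:ℂ)) := by
      filter_upwards [hmem] with y hy using image_eq_zero_of_notMem_tsupport hy
    have hux : u x = 0 := image_eq_zero_of_notMem_tsupport hx
    have hv0 : v =ᶠ[nhds x] (fun _ => (0:ℂ)) := by
      filter_upwards [hu0] with y hy
      simp [hv_def, hy]
    refine ⟨hux, ?_, by simp [hv_def, hux], ?_⟩
    · rw [hu0.deriv_eq, deriv_const]
    · rw [hv0.deriv_eq, deriv_const]
  -- derivative of v on Ioi 0
  set V' : ℝ → ℂ := fun r =>
    (((r + δ) ^ (-s) : ℝ) : ℂ) * deriv u r - ((s/(r+δ) : ℝ) : ℂ) * v r with hV'_def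
  have hder : ∀ x ∈ Ioi (0:ℝ), HasDerivAt v (V' x) x := by
    intro x hx
    have hxδ : 0 < x + δ := by simp only [mem_Ioi] at hx; linarith
    have h0 : HasDerivAt (fun y : ℝ => y + δ) 1 x := (hasDerivAt_id x).add_const δ
    have h2 : HasDerivAt (fun t : ℝ => t ^ (-s)) (-s * (x+δ) ^ (-s-1)) (x+δ) :=
      Real.hasDerivAt_rpow_const (Or.inl hxδ.ne')
    have h1 : HasDerivAt (fun y : ℝ => (y+δ) ^ (-s)) (-s * (x+δ) ^ (-s-1)) x := by
      have h := h2.comp x h0; rw [mul_one] at h; exact h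
    have h3 : HasDerivAt (fun y : ℝ => (((y+δ) ^ (-s) : ℝ) : ℂ))
        ((-s * (x+δ) ^ (-s-1) : ℝ) : ℂ) x := h1.ofReal_comp
    have h4 : HasDerivAt u (deriv u x) x := (hu.differentiable (by simp) x).hasDerivAt
    have h5 := h3.mul h4
    have hr : (-s * (x+δ) ^ (-s-1) : ℝ) = -(s/(x+δ)) * (x+δ) ^ (-s) := by
      rw [show (-s-1 : ℝ) = -s - 1 by ring, Real.rpow_sub hxδ, Real.rpow_one]
      field_simp
    refine h5.congr_deriv ?_
    rw [hV'_def, hv_def, hr]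
    push_cast
    ring
  -- continuity facts on Icc a b
  have hwc : ContinuousOn (fun r : ℝ => (((r + δ) ^ (-s) : ℝ) : ℂ)) (Icc a b) := by
    apply Complex.continuous_ofReal.comp_continuousOn
    intro r hr
    have hrδ : 0 < r + δ := by have := hIccIoi hr; simp only [mem_Ioi] at this; linarith
    have h1 : ContinuousAt (fun y : ℝ => y + δ) r :=
      (continuous_id.add continuous_const).continuousAt
    have h3 : ContinuousAt (fun y : ℝ => (y + δ) ^ (-s)) r :=
      h1.rpow_const (Or.inl hrδ.ne')
    exact h3.continuousWithinAt
  have huc : Continuous u := hu.continuous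
  have hu'c : Continuous (deriv u) := hu.continuous_deriv (by simp)
  have hvc : ContinuousOn v (Icc a b) := hwc.mul huc.continuousOn
  have hqc : ContinuousOn (fun r : ℝ => ((s/(r+δ) : ℝ) : ℂ)) (Icc a b) := by
    apply Complex.continuous_ofReal.comp_continuousOn
    apply continuousOn_const.div ((continuous_id.add continuous_const).continuousOn)
    intro r hr
    have := hIccIoi hr; simp only [mem_Ioi] at this; show r + δ ≠ 0; exact ne_of_gt (by linarith)
  have hPc : ContinuousOn (fun r : ℝ => (((r + δ) ^ (-s) : ℝ) : ℂ) * deriv u r) (Icc a b) :=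
    hwc.mul hu'c.continuousOn
  have hQc : ContinuousOn (fun r : ℝ => ((s/(r+δ) : ℝ) : ℂ) * v r) (Icc a b) := hqc.mul hvc
  have hV'c : ContinuousOn V' (Icc a b) := hPc.sub hQc
  have hWc : ContinuousOn (fun r : ℝ => r ^ (ν-1)) (Icc a b) := by
    intro r hr
    exact (Real.continuousAt_rpow_const r (ν-1)
      (Or.inl (hIccIoi hr).ne')).continuousWithinAt
  have hW0 : ∀ r ∈ Icc a b, (0:ℝ) ≤ r ^ (ν-1) :=
    fun r hr => Real.rpow_nonneg (le_of_lt (hIccIoi hr)) _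
  -- reduce Ioi-integrals to interval integrals
  have hD : (∫ r in Ioi (0:ℝ), ‖deriv v r‖^2 * r^(ν-1))
      = ∫ r in a..b, ‖deriv v r‖^2 * r^(ν-1) := by
    refine my_ioi_to_interval ha hab fun x hx => ?_
    have hxK : x ∉ tsupport u := fun h => hx (hKsub h)
    rw [(hzero x hxK).2.2.2]
    simp
  have hE : (∫ r in Ioi (0:ℝ), ‖(((r + δ) ^ (-s) : ℝ) : ℂ) * deriv u r‖^2 * r^(ν-1))
      = ∫ r in a..b, ‖(((r + δ) ^ (-s) : ℝ) : ℂ) * deriv u r‖^2 * r^(ν-1) := by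
    refine my_ioi_to_interval ha hab fun x hx => ?_
    have hxK : x ∉ tsupport u := fun h => hx (hKsub h)
    rw [(hzero x hxK).2.1]
    simp
  have huIcc : uIcc a b = Icc a b := uIcc_of_le hab
  have hDB : (∫ r in a..b, ‖deriv v r‖^2 * r^(ν-1))
      = ∫ r in a..b, ‖V' r‖^2 * r^(ν-1) := by
    refine integral_congr fun r hr => ?_
    rw [huIcc] at hr
    rw [(hder r (hIccIoi hr)).deriv]
  set A := ∫ r in a..b, ‖v r‖^2 * r^(ν-3) with hA_def
  set B := ∫ r in a..b, ‖V' r‖^2 * r^(ν-1) with hB_def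
  set E := ∫ r in a..b, ‖(((r + δ) ^ (-s) : ℝ) : ℂ) * deriv u r‖^2 * r^(ν-1) with hE_def
  set G := ∫ r in a..b, ‖((s/(r+δ) : ℝ) : ℂ) * v r‖^2 * r^(ν-1) with hG_def
  have hB0 : 0 ≤ B := integral_nonneg hab fun x hx =>
    mul_nonneg (by positivity) (Real.rpow_nonneg (hIccIoi hx).le _)
  have hE0 : 0 ≤ E := integral_nonneg hab fun x hx =>
    mul_nonneg (by positivity) (Real.rpow_nonneg (hIccIoi hx).le _)
  have hG0 : 0 ≤ G := integral_nonneg hab fun x hx =>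
    mul_nonneg (by positivity) (Real.rpow_nonneg (hIccIoi hx).le _)
  -- Hardy
  have hva : v a = 0 := (hzero a (fun h => (lt_irrefl a (hKsub h).1))).2.2.1
  have hvb : v b = 0 := (hzero b (fun h => (lt_irrefl b (hKsub h).2))).2.2.1
  have hHardy : ((ν-2)/2)^2 * A ≤ B :=
    my_hardy_interval hν ha hab (fun r hr => hder r (hIccIoi hr)) hV'c hva hvb
  -- bound G by s^2 * A
  have hGA : G ≤ s^2 * A := by
    have hmono : G ≤ ∫ r in a..b, s^2 * (‖v r‖^2 * r^(ν-3)) := by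
      refine integral_mono_on hab ?_ ?_ ?_
      · exact ((hQc.norm.pow 2).mul hWc).intervalIntegrable_of_Icc hab
      · refine (ContinuousOn.intervalIntegrable_of_Icc hab ?_)
        refine continuousOn_const.mul ((hvc.norm.pow 2).mul ?_)
        intro r hr
        exact (Real.continuousAt_rpow_const r (ν-3)
          (Or.inl (hIccIoi hr).ne')).continuousWithinAt
      · intro r hr
        have hr0 : (0:ℝ) < r := hIccIoi hr
        have hrδ : 0 < r + δ := by linarith
        have hnorm : ‖((s/(r+δ) : ℝ) : ℂ) * v r‖^2 = (s/(r+δ))^2 * ‖v r‖^2 := by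
          rw [norm_mul, Complex.norm_real, Real.norm_eq_abs,
            abs_of_nonneg (by positivity), mul_pow]
        rw [hnorm]
        have hsplit : r^(ν-1) = r^(2:ℝ) * r^(ν-3) := by
          rw [← Real.rpow_add hr0]; congr 1; ring
        rw [hsplit]
        have hr2 : r^(2:ℝ) = r^(2:ℕ) := by
          rw [← Real.rpow_natCast r 2]; norm_num
        rw [hr2]
        have h1 : (s/(r+δ))^2 * r^(2:ℕ) ≤ s^2 := by
          rw [div_pow, div_mul_eq_mul_div, div_le_iff₀ (by positivity)]
          nlinarith [mul_nonneg (sq_nonneg s) (mul_nonneg hδ (by linarith : (0:ℝ) ≤ 2*r + δ))]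
        have h2 : (0:ℝ) ≤ r^(ν-3) := Real.rpow_nonneg hr0.le _
        calc (s/(r+δ))^2 * ‖v r‖^2 * (r^(2:ℕ) * r^(ν-3))
            = ((s/(r+δ))^2 * r^(2:ℕ)) * (‖v r‖^2 * r^(ν-3)) := by ring
          _ ≤ s^2 * (‖v r‖^2 * r^(ν-3)) := by
              refine mul_le_mul_of_nonneg_right h1 (by positivity)
    rw [intervalIntegral.integral_const_mul] at hmono
    exact hmono
  have hGB : G ≤ θ^2 * B := by
    have hθc : θ * ((ν-2)/2) = s := by
      rw [hθ_def]; field_simp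
    have h1 : s^2 * A = θ^2 * (((ν-2)/2)^2 * A) := by
      rw [← hθc]; ring
    calc G ≤ s^2 * A := hGA
      _ = θ^2 * (((ν-2)/2)^2 * A) := h1
      _ ≤ θ^2 * B := mul_le_mul_of_nonneg_left hHardy (sq_nonneg θ)
  have hsG : Real.sqrt G ≤ θ * Real.sqrt B := by
    calc Real.sqrt G ≤ Real.sqrt (θ^2 * B) := Real.sqrt_le_sqrt hGB
      _ = θ * Real.sqrt B := by
          rw [Real.sqrt_mul (sq_nonneg θ), Real.sqrt_sq hθ0]
  -- Minkowski both ways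
  have hm1 : Real.sqrt E ≤ Real.sqrt B + Real.sqrt G := by
    have := my_mink_interval hab (f := V') (g := fun r => ((s/(r+δ) : ℝ) : ℂ) * v r)
      (W := fun r => r^(ν-1)) hV'c hQc hWc hW0
    have heq : (∫ r in a..b, ‖V' r + ((s/(r+δ) : ℝ) : ℂ) * v r‖^2 * r^(ν-1)) = E := by
      refine integral_congr fun r hr => ?_
      have harg : V' r + ((s/(r+δ) : ℝ) : ℂ) * v r
          = (((r + δ) ^ (-s) : ℝ) : ℂ) * deriv u r := by
        simp only [hV'_def]; ring
      rw [harg]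
    rw [heq] at this
    exact this
  have hm2 : Real.sqrt B ≤ Real.sqrt E + Real.sqrt G := by
    have := my_mink_interval hab
      (f := fun r => (((r + δ) ^ (-s) : ℝ) : ℂ) * deriv u r)
      (g := fun r => -(((s/(r+δ) : ℝ) : ℂ) * v r))
      (W := fun r => r^(ν-1)) hPc hQc.neg hWc hW0
    have heq1 : (∫ r in a..b,
        ‖(((r + δ) ^ (-s) : ℝ) : ℂ) * deriv u r + -(((s/(r+δ) : ℝ) : ℂ) * v r)‖^2 * r^(ν-1)) = B := by
      refine integral_congr fun r hr => ?_
      have harg : (((r + δ) ^ (-s) : ℝ) : ℂ) * deriv u r + -(((s/(r+δ) : ℝ) : ℂ) * v r)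
          = V' r := by
        simp only [hV'_def]; ring
      rw [harg]
    have heq2 : (∫ r in a..b, ‖-(((s/(r+δ) : ℝ) : ℂ) * v r)‖^2 * r^(ν-1)) = G := by
      refine integral_congr fun r hr => ?_
      rw [norm_neg]
    rw [heq1, heq2] at this
    exact this
  -- conclusion
  have hsB0 : 0 ≤ Real.sqrt B := Real.sqrt_nonneg _
  have hsE0 : 0 ≤ Real.sqrt E := Real.sqrt_nonneg _
  have hsG0 : 0 ≤ Real.sqrt G := Real.sqrt_nonneg _
  have hkey1 : (1-θ) * Real.sqrt B ≤ Real.sqrt E := by nlinarith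
  have hkey2 : Real.sqrt E ≤ (1+θ) * Real.sqrt B := by nlinarith
  rw [hD, hDB, hE, ← Real.sqrt_eq_rpow, ← Real.sqrt_eq_rpow]
  constructor
  · rw [show ((2:ℝ)/(1-θ))⁻¹ = (1-θ)/2 by rw [inv_div]]
    calc (1-θ)/2 * Real.sqrt B = ((1-θ) * Real.sqrt B)/2 := by ring
      _ ≤ Real.sqrt E / 2 := by linarith
      _ ≤ Real.sqrt E := by linarith
  · calc Real.sqrt E ≤ (1+θ) * Real.sqrt B := hkey2
      _ ≤ (2/(1-θ)) * Real.sqrt B := by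
          refine mul_le_mul_of_nonneg_right ?_ hsB0
          rw [le_div_iff₀ (by linarith)]
          nlinarith
end

section
/- Let n ≥ 3 and 0 ≤ s < (n-2)/2. There exists C_s > 0 such that for all u ∈ C_c^∞((0,∞)) and all δ ≥ 0: ‖(r+δ)^{-s-1} u‖_{L²(r^{n-1}dr)} ≤ C_s ‖(r+δ)^{-s} u'‖_{L²(r^{n-1}dr)}. -/
open MeasureTheory Set

private lemma hardy_ptwise1 (n : ℕ) (hn : 3 ≤ n) (s δ r : ℝ) (hδ : 0 ≤ δ) (hr : 0 < r)
    (c : ℝ) :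
    ((n:ℝ) - 2 - 2*s) * ((r+δ) ^ (-s-1) * c * r ^ (((n:ℝ)-1)/2)) ^ 2
      ≤ (((n:ℝ)-1) * r ^ ((n:ℝ)-2) * (r+δ) ^ (-2*s-1)
          + r ^ ((n:ℝ)-1) * ((-2*s-1) * (r+δ) ^ (-2*s-2))) * c ^ 2 := by
  have hrδ : 0 < r + δ := by linarith
  have e1 : ((r+δ) ^ (-s-1)) ^ 2 = (r+δ) ^ (-2*s-2) := by
    rw [sq, ← Real.rpow_add hrδ]; congr 1; ring
  have e2 : (r ^ (((n:ℝ)-1)/2)) ^ 2 = r ^ ((n:ℝ)-1) := by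
    rw [sq, ← Real.rpow_add hr]; congr 1; ring
  have e3 : (r+δ) ^ (-2*s-1) = (r+δ) * (r+δ) ^ (-2*s-2) := by
    rw [show -2*s-1 = 1 + (-2*s-2) by ring, Real.rpow_add hrδ, Real.rpow_one]
  have e4 : r ^ ((n:ℝ)-1) = r * r ^ ((n:ℝ)-2) := by
    rw [show (n:ℝ)-1 = 1 + ((n:ℝ)-2) by ring, Real.rpow_add hr, Real.rpow_one]
  rw [mul_pow, mul_pow, e1, e2, e3, e4]
  have hP : (0:ℝ) ≤ (r+δ) ^ (-2*s-2) := Real.rpow_nonneg hrδ.le _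
  have hQ : (0:ℝ) ≤ r ^ ((n:ℝ)-2) := Real.rpow_nonneg hr.le _
  have hn3 : (3:ℝ) ≤ (n:ℝ) := by exact_mod_cast hn
  nlinarith [mul_nonneg (mul_nonneg (mul_nonneg (mul_nonneg
      (show (0:ℝ) ≤ (n:ℝ)-1 by linarith) hδ) hQ) hP) (sq_nonneg c)]

private lemma hardy_ptwise2 (n : ℕ) (s δ r : ℝ) (hδ : 0 ≤ δ) (hr : 0 < r) (c c' : ℝ) :
    ((r+δ) ^ (-s-1) * c * r ^ (((n:ℝ)-1)/2)) * ((r+δ) ^ (-s) * c' * r ^ (((n:ℝ)-1)/2))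
      = (r ^ ((n:ℝ)-1) * (r+δ) ^ (-2*s-1)) * (c * c') := by
  have hrδ : 0 < r + δ := by linarith
  have h1 : (r+δ) ^ (-s-1) * (r+δ) ^ (-s) = (r+δ) ^ (-2*s-1) := by
    rw [← Real.rpow_add hrδ]; congr 1; ring
  have h2 : r ^ (((n:ℝ)-1)/2) * r ^ (((n:ℝ)-1)/2) = r ^ ((n:ℝ)-1) := by
    rw [← Real.rpow_add hr]; congr 1; ring
  calc ((r+δ) ^ (-s-1) * c * r ^ (((n:ℝ)-1)/2)) * ((r+δ) ^ (-s) * c' * r ^ (((n:ℝ)-1)/2))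
      = ((r+δ) ^ (-s-1) * (r+δ) ^ (-s)) * ((r ^ (((n:ℝ)-1)/2) * r ^ (((n:ℝ)-1)/2)) * (c * c')) := by
        ring
    _ = (r ^ ((n:ℝ)-1) * (r+δ) ^ (-2*s-1)) * (c * c') := by rw [h1, h2]; ring

private lemma hardy_core (n : ℕ) (hn : 3 ≤ n) (s : ℝ) (u : ℝ → ℂ)
    (hu : ContDiff ℝ (⊤ : ℕ∞) u) (hcs : HasCompactSupport u) (hts : tsupport u ⊆ Ioi 0)
    (hne : (tsupport u).Nonempty) (δ : ℝ) (hδ : 0 ≤ δ) :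
    ((n:ℝ) - 2 - 2*s) * (∫ r in Ioi (0:ℝ), ((r+δ) ^ (-s-1) * ‖u r‖ * r ^ (((n:ℝ)-1)/2)) ^ 2)
      ≤ 2 * ((∫ r in Ioi (0:ℝ), ((r+δ) ^ (-s-1) * ‖u r‖ * r ^ (((n:ℝ)-1)/2)) ^ 2) ^ ((1:ℝ)/2)
          * (∫ r in Ioi (0:ℝ), ((r+δ) ^ (-s) * ‖deriv u r‖ * r ^ (((n:ℝ)-1)/2)) ^ 2) ^ ((1:ℝ)/2)) := by
  -- notation
  set A : ℝ → ℝ := fun r => (r+δ) ^ (-s-1) * ‖u r‖ * r ^ (((n:ℝ)-1)/2) with hA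
  set B : ℝ → ℝ := fun r => (r+δ) ^ (-s) * ‖deriv u r‖ * r ^ (((n:ℝ)-1)/2) with hB
  set v : ℝ → ℝ := fun r => ‖u r‖ ^ 2 with hv
  set v' : ℝ → ℝ := fun r => 2 * (inner ℝ (u r) (deriv u r) : ℝ) with hv'
  set g : ℝ → ℝ := fun r => r ^ ((n:ℝ)-1) * (r+δ) ^ (-2*s-1) with hg
  set g' : ℝ → ℝ := fun r => ((n:ℝ)-1) * r ^ ((n:ℝ)-2) * (r+δ) ^ (-2*s-1)
      + r ^ ((n:ℝ)-1) * ((-2*s-1) * (r+δ) ^ (-2*s-2)) with hg'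
  -- support bounds
  obtain ⟨a, b, ha, hab, hKab⟩ : ∃ a b : ℝ, 0 < a ∧ a ≤ b ∧ tsupport u ⊆ Icc a b := by
    refine ⟨sInf (tsupport u), sSup (tsupport u), hts (hcs.sInf_mem hne), ?_, ?_⟩
    · exact Real.sInf_le_sSup _ hcs.bddBelow hcs.bddAbove
    · exact fun x hx => ⟨csInf_le hcs.bddBelow hx, le_csSup hcs.bddAbove hx⟩
  set a' : ℝ := a/2 with ha'def
  set b' : ℝ := b+1 with hb'def
  have ha' : 0 < a' := by rw [ha'def]; positivity
  have ha'lt : a' < a := by rw [ha'def]; linarith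
  have hb'gt : b < b' := by rw [hb'def]; linarith
  have ha'b' : a' ≤ b' := by linarith
  have hIcc : Icc a' b' ⊆ Ioi 0 := fun x hx => lt_of_lt_of_le ha' hx.1
  have hu0 : ∀ x, x ∉ Icc a b → u x = 0 := fun x hx =>
    image_eq_zero_of_notMem_tsupport (fun h => hx (hKab h))
  have hu'0 : ∀ x, x ∉ Icc a b → deriv u x = 0 := by
    intro x hx
    by_contra h
    exact hx (hKab (support_deriv_subset h))
  have hucont : Continuous u := hu.continuous
  have hu'cont : Continuous (deriv u) := hu.continuous_deriv (by simp)
  -- indicator transfer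
  have hind : ∀ w : ℝ → ℝ, (∀ x, x ∉ Icc a b → w x = 0) →
      (Ioi (0:ℝ)).indicator w = (Ioc a' b').indicator w := by
    intro w hw
    ext x
    by_cases hx : x ∈ Ioc a' b'
    · have hx0 : x ∈ Ioi (0:ℝ) := lt_trans ha' hx.1
      rw [indicator_of_mem hx, indicator_of_mem hx0]
    · rw [indicator_of_notMem hx]
      by_cases hx0 : x ∈ Ioi (0:ℝ)
      · rw [indicator_of_mem hx0]
        apply hw
        intro hmem
        rcases not_and_or.1 hx with h | h
        · push_neg at h
          have hxa : x < a := lt_of_le_of_lt h ha'lt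
          exact absurd hmem.1 (not_le.2 hxa)
        · push_neg at h
          have hbx : b < x := lt_trans hb'gt h
          exact absurd hmem.2 (not_le.2 hbx)
      · rw [indicator_of_notMem hx0]
  have htrans : ∀ w : ℝ → ℝ, (∀ x, x ∉ Icc a b → w x = 0) → ContinuousOn w (Ioi 0) →
      IntegrableOn w (Ioi 0) ∧ (∫ x in Ioi (0:ℝ), w x) = ∫ x in a'..b', w x := by
    intro w hw hc
    have hi := hind w hw
    constructor
    · have h1 : IntegrableOn w (Icc a' b') :=
        (hc.mono hIcc).integrableOn_compact isCompact_Icc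
      rw [← integrable_indicator_iff measurableSet_Ioi, hi,
        integrable_indicator_iff measurableSet_Ioc]
      exact h1.mono_set Ioc_subset_Icc_self
    · rw [← integral_indicator measurableSet_Ioi, hi, integral_indicator measurableSet_Ioc,
        ← intervalIntegral.integral_of_le ha'b']
  -- continuity facts on Ioi 0
  have hcadd : ContinuousOn (fun r : ℝ => r + δ) (Ioi 0) :=
    (continuous_id.add continuous_const).continuousOn
  have hcne : ∀ x ∈ Ioi (0:ℝ), x + δ ≠ 0 ∨ True := fun x hx => Or.inl (by
    have : (0:ℝ) < x := hx
    positivity)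
  have hcw1 : ∀ p : ℝ, ContinuousOn (fun r : ℝ => (r+δ) ^ p) (Ioi 0) := fun p =>
    hcadd.rpow_const (fun x hx => Or.inl (by have : (0:ℝ) < x := hx; positivity))
  have hcw2 : ∀ p : ℝ, ContinuousOn (fun r : ℝ => r ^ p) (Ioi 0) := fun p =>
    continuousOn_id.rpow_const (fun x hx => Or.inl (ne_of_gt hx))
  have hcA : ContinuousOn A (Ioi 0) :=
    ((hcw1 _).mul (hucont.norm.continuousOn)).mul (hcw2 _)
  have hcB : ContinuousOn B (Ioi 0) :=
    ((hcw1 _).mul (hu'cont.norm.continuousOn)).mul (hcw2 _)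
  have hcv : ContinuousOn v (Ioi 0) := ((hucont.norm.pow 2).continuousOn)
  have hcv' : Continuous v' := continuous_const.mul (hucont.inner hu'cont)
  have hcg : ContinuousOn g (Ioi 0) := (hcw2 _).mul (hcw1 _)
  have hcg' : ContinuousOn g' (Ioi 0) :=
    ((continuousOn_const.mul (hcw2 _)).mul (hcw1 _)).add
      ((hcw2 _).mul (continuousOn_const.mul (hcw1 _)))
  -- vanishing facts
  have hzA2 : ∀ x, x ∉ Icc a b → A x ^ 2 = 0 := by
    intro x hx; simp [hA, hu0 x hx]
  have hzg'v : ∀ x, x ∉ Icc a b → g' x * v x = 0 := by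
    intro x hx; simp [hv, hu0 x hx]
  have hzAB : ∀ x, x ∉ Icc a b → A x * B x = 0 := by
    intro x hx; simp [hA, hu0 x hx]
  -- derivatives
  have hgderiv : ∀ r ∈ Ioi (0:ℝ), HasDerivAt g (g' r) r := by
    intro r hr
    have hr0 : (0:ℝ) < r := hr
    have hrδ : (0:ℝ) < r + δ := by linarith
    have h1 : HasDerivAt (fun r : ℝ => r ^ ((n:ℝ)-1)) (((n:ℝ)-1) * r ^ ((n:ℝ)-2)) r := by
      have := Real.hasDerivAt_rpow_const (p := (n:ℝ)-1) (Or.inl hr0.ne')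
      rwa [show (n:ℝ)-1-1 = (n:ℝ)-2 by ring] at this
    have h2 : HasDerivAt (fun r : ℝ => (r+δ) ^ (-2*s-1)) ((-2*s-1) * (r+δ) ^ (-2*s-2)) r := by
      have hadd : HasDerivAt (fun r : ℝ => r + δ) 1 r := (hasDerivAt_id r).add_const δ
      have := (Real.hasDerivAt_rpow_const (x := r+δ) (p := -2*s-1) (Or.inl hrδ.ne')).comp r hadd
      simp only [Function.comp_def, mul_one] at this
      rwa [show -2*s-1-1 = -2*s-2 by ring] at this
    exact h1.mul h2
  have hvderiv : ∀ r : ℝ, HasDerivAt v (v' r) r := by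
    intro r
    exact ((hu.differentiable (by simp) r).hasDerivAt).norm_sq
  -- Step 1: κ * I ≤ ∫ g' v over Ioi 0
  have hIntA2 : IntegrableOn (fun r => A r ^ 2) (Ioi 0) :=
    (htrans _ hzA2 (hcA.pow 2)).1
  have hIntg'v : IntegrableOn (fun r => g' r * v r) (Ioi 0) :=
    (htrans _ hzg'v (hcg'.mul hcv)).1
  have step1 : ((n:ℝ) - 2 - 2*s) * (∫ r in Ioi (0:ℝ), A r ^ 2)
      ≤ ∫ r in Ioi (0:ℝ), g' r * v r := by
    rw [← integral_const_mul]
    apply setIntegral_mono_on (hIntA2.const_mul _) hIntg'v measurableSet_Ioi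
    intro r hr
    have := hardy_ptwise1 n hn s δ r hδ hr ‖u r‖
    simpa [hA, hg', hv] using this
  -- Step 2: transfer to interval
  have step2 : (∫ r in Ioi (0:ℝ), g' r * v r) = ∫ r in a'..b', g' r * v r :=
    (htrans _ hzg'v (hcg'.mul hcv)).2
  -- Step 3: integration by parts
  have hva' : v a' = 0 := by
    have : a' ∉ Icc a b := by
      intro h
      have : a ≤ a' := h.1
      simp only [ha'def] at this; linarith
    simp [hv, hu0 _ this]
  have hvb' : v b' = 0 := by
    have : b' ∉ Icc a b := by
      intro h
      have : b' ≤ b := h.2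
      simp only [hb'def] at this; linarith
    simp [hv, hu0 _ this]
  have huIcc : uIcc a' b' = Icc a' b' := uIcc_of_le ha'b'
  have step3 : (∫ r in a'..b', g' r * v r) = -∫ r in a'..b', g r * v' r := by
    have hparts := intervalIntegral.integral_mul_deriv_eq_deriv_mul
      (u := g) (v := v) (u' := g') (v' := v')
      (fun x hx => hgderiv x (hIcc (huIcc ▸ hx)))
      (fun x hx => hvderiv x)
      (by apply ContinuousOn.intervalIntegrable; rw [huIcc]; exact hcg'.mono hIcc)
      (hcv'.continuousOn.intervalIntegrable)
    rw [hva', hvb'] at hparts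
    simp only [mul_zero, sub_zero, zero_sub] at hparts
    rw [hparts]; ring
  -- Step 4: bound by 2 A B
  have step4 : (-∫ r in a'..b', g r * v' r) ≤ ∫ r in a'..b', 2 * (A r * B r) := by
    rw [← intervalIntegral.integral_neg]
    apply intervalIntegral.integral_mono_on ha'b'
    · apply ContinuousOn.intervalIntegrable
      rw [huIcc]
      exact ((hcg.mono hIcc).mul hcv'.continuousOn).neg
    · apply ContinuousOn.intervalIntegrable
      rw [huIcc]
      exact continuousOn_const.mul ((hcA.mul hcB).mono hIcc)
    · intro r hr
      have hr0 : (0:ℝ) < r := hIcc hr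
      have hrδ : (0:ℝ) < r + δ := by linarith
      have hg0 : 0 ≤ g r := by
        simp only [hg]
        exact mul_nonneg (Real.rpow_nonneg hr0.le _) (Real.rpow_nonneg hrδ.le _)
      have hinner : |(inner ℝ (u r) (deriv u r) : ℝ)| ≤ ‖u r‖ * ‖deriv u r‖ :=
        abs_real_inner_le_norm _ _
      have hABid : A r * B r = g r * (‖u r‖ * ‖deriv u r‖) := by
        simp only [hA, hB, hg]
        exact hardy_ptwise2 n s δ r hδ hr0 _ _
      have h1 : -(inner ℝ (u r) (deriv u r) : ℝ) ≤ ‖u r‖ * ‖deriv u r‖ :=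
        (neg_le_abs _).trans hinner
      have := mul_le_mul_of_nonneg_left h1 hg0
      simp only [hv']
      rw [hABid]
      nlinarith [this]
  -- Step 5: back to Ioi 0
  have step5 : (∫ r in a'..b', 2 * (A r * B r)) = 2 * ∫ r in Ioi (0:ℝ), A r * B r := by
    rw [intervalIntegral.integral_const_mul, (htrans _ hzAB (hcA.mul hcB)).2]
  -- Step 6: Cauchy-Schwarz
  have hIntB2 : IntegrableOn (fun r => B r ^ 2) (Ioi 0) := by
    refine (htrans _ ?_ (hcB.pow 2)).1
    intro x hx; simp [hB, hu'0 x hx]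
  have hmeasA : AEStronglyMeasurable A (volume.restrict (Ioi 0)) :=
    hcA.aestronglyMeasurable measurableSet_Ioi
  have hmeasB : AEStronglyMeasurable B (volume.restrict (Ioi 0)) :=
    hcB.aestronglyMeasurable measurableSet_Ioi
  have hA0 : ∀ x ∈ Ioi (0:ℝ), 0 ≤ A x := by
    intro x hx
    have hx0 : (0:ℝ) < x := hx
    have : (0:ℝ) < x + δ := by linarith
    simp only [hA]
    positivity
  have hB0 : ∀ x ∈ Ioi (0:ℝ), 0 ≤ B x := by
    intro x hx
    have hx0 : (0:ℝ) < x := hx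
    have : (0:ℝ) < x + δ := by linarith
    simp only [hB]
    positivity
  have step6 : (∫ r in Ioi (0:ℝ), A r * B r)
      ≤ (∫ r in Ioi (0:ℝ), A r ^ 2) ^ ((1:ℝ)/2) * (∫ r in Ioi (0:ℝ), B r ^ 2) ^ ((1:ℝ)/2) := by
    have hpq : Real.HolderConjugate 2 2 := Real.HolderConjugate.two_two
    have hmemA : MemLp A (ENNReal.ofReal 2) (volume.restrict (Ioi 0)) := by
      rw [show ENNReal.ofReal 2 = 2 by norm_num]
      exact (memLp_two_iff_integrable_sq hmeasA).2 hIntA2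
    have hmemB : MemLp B (ENNReal.ofReal 2) (volume.restrict (Ioi 0)) := by
      rw [show ENNReal.ofReal 2 = 2 by norm_num]
      exact (memLp_two_iff_integrable_sq hmeasB).2 hIntB2
    have hAae : 0 ≤ᵐ[volume.restrict (Ioi 0)] A :=
      (ae_restrict_iff' measurableSet_Ioi).2 (Filter.Eventually.of_forall hA0)
    have hBae : 0 ≤ᵐ[volume.restrict (Ioi 0)] B :=
      (ae_restrict_iff' measurableSet_Ioi).2 (Filter.Eventually.of_forall hB0)
    have := integral_mul_le_Lp_mul_Lq_of_nonneg hpq hAae hBae hmemA hmemB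
    simpa [show ∀ x : ℝ, x ^ (2:ℝ) = x ^ 2 from fun x => by
      rw [show (2:ℝ) = ((2:ℕ):ℝ) by norm_num, Real.rpow_natCast]] using this
  calc ((n:ℝ) - 2 - 2*s) * (∫ r in Ioi (0:ℝ), A r ^ 2)
      ≤ ∫ r in Ioi (0:ℝ), g' r * v r := step1
    _ = ∫ r in a'..b', g' r * v r := step2
    _ = -∫ r in a'..b', g r * v' r := step3
    _ ≤ ∫ r in a'..b', 2 * (A r * B r) := step4
    _ = 2 * ∫ r in Ioi (0:ℝ), A r * B r := step5
    _ ≤ 2 * ((∫ r in Ioi (0:ℝ), A r ^ 2) ^ ((1:ℝ)/2)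
          * (∫ r in Ioi (0:ℝ), B r ^ 2) ^ ((1:ℝ)/2)) := by linarith [step6]

theorem shifted_hardy_inequality (n : ℕ) (hn : 3 ≤ n) (s : ℝ)
    (hs0 : 0 ≤ s) (hs : s < ((n : ℝ) - 2) / 2) :
    ∃ C > 0, ∀ u : ℝ → ℂ, ContDiff ℝ (⊤ : ℕ∞) u → HasCompactSupport u → tsupport u ⊆ Set.Ioi 0 →
      ∀ δ : ℝ, 0 ≤ δ →
      (∫ r in Set.Ioi (0:ℝ),
          ‖(((r + δ) ^ (-s - 1) : ℝ) : ℂ) * u r‖ ^ 2 * r ^ ((n : ℝ) - 1)) ^ ((1:ℝ)/2)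
        ≤ C * (∫ r in Set.Ioi (0:ℝ),
          ‖(((r + δ) ^ (-s) : ℝ) : ℂ) * deriv u r‖ ^ 2 * r ^ ((n : ℝ) - 1)) ^ ((1:ℝ)/2) := by
  have hκ : 0 < (n:ℝ) - 2 - 2*s := by linarith
  refine ⟨2 / ((n:ℝ) - 2 - 2*s), by positivity, ?_⟩
  intro u hu hcs hts δ hδ
  -- rewrite integrands
  have hLHS : (∫ r in Ioi (0:ℝ), ‖(((r + δ) ^ (-s - 1) : ℝ) : ℂ) * u r‖ ^ 2 * r ^ ((n : ℝ) - 1))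
      = ∫ r in Ioi (0:ℝ), ((r+δ) ^ (-s-1) * ‖u r‖ * r ^ (((n:ℝ)-1)/2)) ^ 2 := by
    apply setIntegral_congr_fun measurableSet_Ioi
    intro r hr
    have hr0 : (0:ℝ) < r := hr
    have hrδ : (0:ℝ) < r + δ := by linarith
    have e2 : (r ^ (((n:ℝ)-1)/2)) ^ 2 = r ^ ((n:ℝ)-1) := by
      rw [sq, ← Real.rpow_add hr0]; congr 1; ring
    dsimp only
    rw [norm_mul, Complex.norm_real, Real.norm_eq_abs,
      abs_of_nonneg (Real.rpow_nonneg hrδ.le _), mul_pow, mul_pow, e2]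
    ring
  have hRHS : (∫ r in Ioi (0:ℝ), ‖(((r + δ) ^ (-s) : ℝ) : ℂ) * deriv u r‖ ^ 2 * r ^ ((n : ℝ) - 1))
      = ∫ r in Ioi (0:ℝ), ((r+δ) ^ (-s) * ‖deriv u r‖ * r ^ (((n:ℝ)-1)/2)) ^ 2 := by
    apply setIntegral_congr_fun measurableSet_Ioi
    intro r hr
    have hr0 : (0:ℝ) < r := hr
    have hrδ : (0:ℝ) < r + δ := by linarith
    have e2 : (r ^ (((n:ℝ)-1)/2)) ^ 2 = r ^ ((n:ℝ)-1) := by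
      rw [sq, ← Real.rpow_add hr0]; congr 1; ring
    dsimp only
    rw [norm_mul, Complex.norm_real, Real.norm_eq_abs,
      abs_of_nonneg (Real.rpow_nonneg hrδ.le _), mul_pow, mul_pow, e2]
    ring
  rw [hLHS, hRHS]
  set I := ∫ r in Ioi (0:ℝ), ((r+δ) ^ (-s-1) * ‖u r‖ * r ^ (((n:ℝ)-1)/2)) ^ 2 with hI
  set J := ∫ r in Ioi (0:ℝ), ((r+δ) ^ (-s) * ‖deriv u r‖ * r ^ (((n:ℝ)-1)/2)) ^ 2 with hJ
  have hI0 : 0 ≤ I := setIntegral_nonneg measurableSet_Ioi (fun x _ => sq_nonneg _)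
  have hJ0 : 0 ≤ J := setIntegral_nonneg measurableSet_Ioi (fun x _ => sq_nonneg _)
  have hx0 : 0 ≤ I ^ ((1:ℝ)/2) := Real.rpow_nonneg hI0 _
  have hy0 : 0 ≤ J ^ ((1:ℝ)/2) := Real.rpow_nonneg hJ0 _
  rcases eq_empty_or_nonempty (tsupport u) with hK | hK
  · -- u ≡ 0
    have hu0 : ∀ x, u x = 0 := by
      intro x
      by_contra h
      have hmem : x ∈ tsupport u := subset_tsupport u h
      rw [hK] at hmem
      exact hmem
    have hIz : I = 0 := by
      rw [hI]
      simp [hu0]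
    rw [hIz, Real.zero_rpow (by norm_num : ((1:ℝ)/2) ≠ 0)]
    exact mul_nonneg (by positivity) hy0
  · have key := hardy_core n hn s u hu hcs hts hK δ hδ
    rw [← hI, ← hJ] at key
    have hxx : I ^ ((1:ℝ)/2) * I ^ ((1:ℝ)/2) = I := by
      rw [← Real.rpow_add' hI0 (by norm_num)]
      norm_num
    rcases eq_or_lt_of_le hx0 with hx | hx
    · rw [← hx]
      positivity
    · have h2 : ((n:ℝ) - 2 - 2*s) * I ^ ((1:ℝ)/2) ≤ 2 * J ^ ((1:ℝ)/2) := by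
        have := key
        nlinarith [hxx, hx]
      rw [div_mul_eq_mul_div, le_div_iff₀ hκ]
      nlinarith [h2, hx.le]
end

section
/- Let n ≥ 3, 0 ≤ s ≤ (n-2)/2, δ ≥ 0. For every u ∈ C_c^∞((0,∞)), Re ∫₀^∞ conj(u'(r)) · d/dr( (r+δ)^{-2s} u(r) ) r^{n-1} dr = ∫₀^∞ (r+δ)^{-2s} |u'(r)|² r^{n-1} dr + s ∫₀^∞ r^{n-2}(r+δ)^{-2s-2} ( (n-2-2s) r + (n-1) δ ) |u(r)|² dr; in particular the left-hand side is ≥ ∫₀^∞ (r+δ)^{-2s}|u'(r)|² r^{n-1} dr. -/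
open MeasureTheory Set

private lemma cont_aux {E : Type*} [NormedAddCommGroup E] {ε : ℝ} (hε : 0 < ε) {f : ℝ → E}
    (hf : ContinuousOn f (Set.Ioi 0)) (h0 : ∀ r, r < ε → f r = 0) : Continuous f := by
  rw [continuous_iff_continuousAt]
  intro x
  rcases lt_or_ge x ε with h | h
  · have hev : f =ᶠ[nhds x] (fun _ => 0) := by
      filter_upwards [Iio_mem_nhds h] with y hy
      exact h0 y hy
    exact (continuousAt_congr hev).mpr continuousAt_const
  · exact hf.continuousAt (Ioi_mem_nhds (lt_of_lt_of_le hε h))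

private lemma re_conj_mul (z : ℂ) : ((starRingEnd ℂ) z * z).re = ‖z‖ ^ 2 := by
  rw [mul_comm, Complex.mul_conj, Complex.ofReal_re, ← Complex.sq_norm]

theorem dirichlet_form_weight_identity (n : ℕ) (hn : 3 ≤ n) (s δ : ℝ)
    (hs0 : 0 ≤ s) (hs : s ≤ ((n : ℝ) - 2) / 2) (hδ : 0 ≤ δ)
    (u : ℝ → ℂ) (hu : ContDiff ℝ (⊤ : ℕ∞) u) (hcs : HasCompactSupport u)
    (hsupp : tsupport u ⊆ Set.Ioi 0) :
    (∫ r in Set.Ioi (0:ℝ),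
        (starRingEnd ℂ) (deriv u r) *
          deriv (fun x => (((x + δ) ^ (-(2 * s)) : ℝ) : ℂ) * u x) r *
          ((r ^ ((n : ℝ) - 1) : ℝ) : ℂ)).re
      = (∫ r in Set.Ioi (0:ℝ), (r + δ) ^ (-(2 * s)) * ‖deriv u r‖ ^ 2 * r ^ ((n : ℝ) - 1))
        + s * ∫ r in Set.Ioi (0:ℝ),
            r ^ ((n : ℝ) - 2) * (r + δ) ^ (-(2 * s) - 2) *
              (((n : ℝ) - 2 - 2 * s) * r + ((n : ℝ) - 1) * δ) * ‖u r‖ ^ 2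
    ∧ (∫ r in Set.Ioi (0:ℝ), (r + δ) ^ (-(2 * s)) * ‖deriv u r‖ ^ 2 * r ^ ((n : ℝ) - 1))
        ≤ (∫ r in Set.Ioi (0:ℝ),
            (starRingEnd ℂ) (deriv u r) *
              deriv (fun x => (((x + δ) ^ (-(2 * s)) : ℝ) : ℂ) * u x) r *
              ((r ^ ((n : ℝ) - 1) : ℝ) : ℂ)).re := by
  have hcu : Continuous u := hu.continuous
  have hdu : Continuous (deriv u) := hu.continuous_deriv (by simp)
  have hUd : ∀ r, HasDerivAt u (deriv u r) r := fun r =>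
    ((hu.differentiable (by simp)) r).hasDerivAt
  have hu0 : ∀ r, r ∉ tsupport u → u r = 0 := fun r hr => image_eq_zero_of_notMem_tsupport hr
  have hdu0 : ∀ r, r ∉ tsupport u → deriv u r = 0 := by
    intro r hr
    by_contra h
    exact hr (support_deriv_subset h)
  obtain ⟨ε, hε, hεK⟩ : ∃ ε > 0, tsupport u ⊆ Ici ε := by
    rcases (tsupport u).eq_empty_or_nonempty with h | h
    · exact ⟨1, one_pos, by simp [h]⟩
    · exact ⟨sInf (tsupport u), hsupp (hcs.sInf_mem h),
        fun x hx => csInf_le hcs.bddBelow hx⟩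
  obtain ⟨b, hbK, hb0⟩ : ∃ b, tsupport u ⊆ Iio b ∧ 0 < b := by
    obtain ⟨b0, hb0⟩ := hcs.bddAbove
    refine ⟨max b0 0 + 1, fun x hx => ?_, by positivity⟩
    have h1 : x ≤ b0 := hb0 hx
    have h2 : b0 ≤ max b0 0 := le_max_left _ _
    simp only [mem_Iio]
    linarith
  have huε : ∀ r, r < ε → u r = 0 := fun r hr =>
    hu0 r (fun h => absurd (hεK h) (not_le.mpr hr))
  have hduε : ∀ r, r < ε → deriv u r = 0 := fun r hr =>
    hdu0 r (fun h => absurd (hεK h) (not_le.mpr hr))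
  -- named functions
  set G : ℝ → ℝ := fun r => 2 * ((starRingEnd ℂ) (u r) * deriv u r).re with hGdef
  set W : ℝ → ℝ := fun r => r ^ ((n : ℝ) - 2) * (r + δ) ^ (-(2 * s) - 2) *
      (((n : ℝ) - 2 - 2 * s) * r + ((n : ℝ) - 1) * δ) with hWdef
  set w : ℝ → ℝ := fun r => (r + δ) ^ (-(2 * s) - 1) * r ^ ((n : ℝ) - 1) with hwdef
  set F : ℝ → ℝ := fun r => w r * ‖u r‖ ^ 2 with hFdef
  set φ : ℝ → ℝ := fun r => W r * ‖u r‖ ^ 2 + w r * G r with hφdef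
  set A : ℝ → ℝ := fun r => (r + δ) ^ (-(2 * s)) * ‖deriv u r‖ ^ 2 * r ^ ((n : ℝ) - 1)
    with hAdef
  set Lc : ℝ → ℂ := fun r => (starRingEnd ℂ) (deriv u r) *
      deriv (fun x => (((x + δ) ^ (-(2 * s)) : ℝ) : ℂ) * u x) r *
      ((r ^ ((n : ℝ) - 1) : ℝ) : ℂ) with hLcdef
  -- derivative facts
  have hrpow : ∀ (p : ℝ) (r : ℝ), 0 < r →
      HasDerivAt (fun x : ℝ => (x + δ) ^ p) (p * (r + δ) ^ (p - 1)) r := by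
    intro p r hr
    have h1 : HasDerivAt (fun x : ℝ => x + δ) 1 r := (hasDerivAt_id r).add_const δ
    have h2 := h1.rpow_const (p := p) (Or.inl (by positivity))
    simpa using h2
  have hxpow : ∀ (p : ℝ) (r : ℝ), 0 < r →
      HasDerivAt (fun x : ℝ => x ^ p) (p * r ^ (p - 1)) r := fun p r hr =>
    Real.hasDerivAt_rpow_const (Or.inl hr.ne')
  have hG : ∀ r, HasDerivAt (fun x => ‖u x‖ ^ 2) (G r) r := by
    intro r
    have h0 : HasDerivAt (fun x => star (u x) * u x)
        (star (deriv u r) * u r + star (u r) * deriv u r) r := (hUd r).star.mul (hUd r)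
    have h2 : HasDerivAt (fun x => (Complex.reCLM) (star (u x) * u x))
        ((Complex.reCLM) (star (deriv u r) * u r + star (u r) * deriv u r)) r :=
      Complex.reCLM.hasFDerivAt.comp_hasDerivAt r h0
    have hfun : (fun x : ℝ => (Complex.reCLM) (star (u x) * u x)) =
        (fun x => ‖u x‖ ^ 2) := by
      funext x
      show (star (u x) * u x).re = ‖u x‖ ^ 2
      rw [← starRingEnd_apply]
      exact re_conj_mul (u x)
    have hval : (Complex.reCLM) (star (deriv u r) * u r + star (u r) * deriv u r) = G r := by
      show (star (deriv u r) * u r + star (u r) * deriv u r).re = G r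
      rw [show star (deriv u r) * u r = star (star (u r) * deriv u r) by
        rw [star_mul, star_star]]
      rw [Complex.add_re]
      rw [show (star (star (u r) * deriv u r)).re = (star (u r) * deriv u r).re from
        Complex.conj_re _]
      rw [hGdef]
      show _ = 2 * ((starRingEnd ℂ) (u r) * deriv u r).re
      rw [starRingEnd_apply]
      ring
    rw [← hfun, ← hval]
    exact h2
  have hw : ∀ r, 0 < r → HasDerivAt w (W r) r := by
    intro r hr
    have h3 := (hrpow (-(2 * s) - 1) r hr).mul (hxpow ((n : ℝ) - 1) r hr)
    refine h3.congr_deriv (Eq.symm ?_)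
    have e1 : r ^ ((n : ℝ) - 1) = r ^ ((n : ℝ) - 2) * r := by
      rw [show ((n : ℝ) - 1) = ((n : ℝ) - 2) + 1 by ring, Real.rpow_add_one hr.ne']
    have e2 : (r + δ) ^ (-(2 * s) - 1) = (r + δ) ^ (-(2 * s) - 2) * (r + δ) := by
      rw [show (-(2 * s) - 1) = (-(2 * s) - 2) + 1 by ring,
        Real.rpow_add_one (by positivity)]
    have e3 : (-(2 * s) - 1 - 1) = (-(2 * s) - 2) := by ring
    have e4 : ((n : ℝ) - 1 - 1) = ((n : ℝ) - 2) := by ring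
    rw [hWdef, e3, e4, e1, e2]
    ring
  have hcderiv : ∀ r : ℝ, 0 < r →
      deriv (fun x => (((x + δ) ^ (-(2 * s)) : ℝ) : ℂ) * u x) r =
        (((-(2 * s) * (r + δ) ^ (-(2 * s) - 1) : ℝ)) : ℂ) * u r +
          (((r + δ) ^ (-(2 * s)) : ℝ) : ℂ) * deriv u r := by
    intro r hr
    have h1 := ((hrpow (-(2 * s)) r hr).ofReal_comp).mul (hUd r)
    simpa [Pi.mul_def] using h1.deriv
  -- pointwise identity on Ioi 0
  have hL : ∀ r ∈ Ioi (0 : ℝ), (Lc r).re = A r + s * (W r * ‖u r‖ ^ 2) - s * φ r := by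
    intro r hr
    have hr' : (0 : ℝ) < r := hr
    rw [hLcdef]
    simp only [hcderiv r hr']
    simp only [hφdef, hAdef, hGdef]
    simp only [Complex.mul_re, Complex.add_re, Complex.add_im, Complex.mul_im,
      Complex.conj_re, Complex.conj_im, Complex.ofReal_re, Complex.ofReal_im,
      Complex.sq_norm, Complex.normSq_apply]
    ring
  -- continuity helpers
  have hrpC : ∀ p : ℝ, ContinuousOn (fun r : ℝ => (r + δ) ^ p) (Ioi 0) := by
    intro p r hr
    have hr' : (0 : ℝ) < r := hr
    have h1 : ContinuousAt (fun y : ℝ => y + δ) r := by fun_prop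
    have h2 : ContinuousAt (fun y : ℝ => y ^ p) (r + δ) :=
      Real.continuousAt_rpow_const (r + δ) p (Or.inl (by positivity))
    exact (ContinuousAt.comp (g := fun y : ℝ => y ^ p) (f := fun y : ℝ => y + δ)
      h2 h1).continuousWithinAt
  have hxpC : ∀ p : ℝ, ContinuousOn (fun r : ℝ => r ^ p) (Ioi 0) := by
    intro p r hr
    have hr' : (0 : ℝ) < r := hr
    exact (Real.continuousAt_rpow_const r p (Or.inl hr'.ne')).continuousWithinAt
  have hGc : Continuous G := by
    apply continuous_const.mul
    exact Complex.continuous_re.comp ((continuous_star.comp hcu).mul hdu)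
  have hu2c : Continuous (fun r => ‖u r‖ ^ 2) := (hcu.norm.pow 2)
  have hdu2c : Continuous (fun r => ‖deriv u r‖ ^ 2) := (hdu.norm.pow 2)
  have hWc : ContinuousOn W (Ioi 0) := by
    apply ContinuousOn.mul
    · exact (hxpC _).mul (hrpC _)
    · fun_prop
  have hwc : ContinuousOn w (Ioi 0) := (hrpC _).mul (hxpC _)
  have hφcOn : ContinuousOn φ (Ioi 0) :=
    ((hWc.mul hu2c.continuousOn).add (hwc.mul hGc.continuousOn))
  have hφc : Continuous φ := by
    apply cont_aux hε hφcOn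
    intro r hr
    simp [hφdef, hGdef, huε r hr, hduε r hr]
  have hφ0 : ∀ r, r ∉ tsupport u → φ r = 0 := by
    intro r hr
    simp [hφdef, hGdef, hu0 r hr, hdu0 r hr]
  have hAc : Continuous A := by
    apply cont_aux hε
    · exact ((hrpC _).mul hdu2c.continuousOn).mul (hxpC _)
    · intro r hr
      simp [hAdef, hduε r hr]
  have hA0 : ∀ r, r ∉ tsupport u → A r = 0 := by
    intro r hr
    simp [hAdef, hdu0 r hr]
  have hBc : Continuous (fun r => W r * ‖u r‖ ^ 2) := by
    apply cont_aux hε (hWc.mul hu2c.continuousOn)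
    intro r hr
    simp [huε r hr]
  have hB0 : ∀ r, r ∉ tsupport u → W r * ‖u r‖ ^ 2 = 0 := by
    intro r hr
    simp [hu0 r hr]
  have hLcc : Continuous Lc := by
    apply cont_aux hε
    · apply ContinuousOn.congr (f := fun r : ℝ =>
        (starRingEnd ℂ) (deriv u r) *
          ((((-(2 * s) * (r + δ) ^ (-(2 * s) - 1) : ℝ)) : ℂ) * u r +
            (((r + δ) ^ (-(2 * s)) : ℝ) : ℂ) * deriv u r) *
          ((r ^ ((n : ℝ) - 1) : ℝ) : ℂ))
      · apply ContinuousOn.mul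
        · apply ContinuousOn.mul
          · exact (continuous_star.comp hdu).continuousOn
          · apply ContinuousOn.add
            · exact ((Complex.continuous_ofReal.comp_continuousOn
                ((continuousOn_const.mul (hrpC _)))).mul hcu.continuousOn)
            · exact ((Complex.continuous_ofReal.comp_continuousOn (hrpC _)).mul
                hdu.continuousOn)
        · exact Complex.continuous_ofReal.comp_continuousOn (hxpC _)
      · intro r hr
        rw [hLcdef]
        simp only [hcderiv r hr]
    · intro r hr
      simp [hLcdef, hduε r hr]
  have hLc0 : ∀ r, r ∉ tsupport u → Lc r = 0 := by
    intro r hr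
    simp [hLcdef, hdu0 r hr]
  -- compact support
  have hKsub : ∀ {E : Type} [NormedAddCommGroup E] (f : ℝ → E),
      (∀ r, r ∉ tsupport u → f r = 0) → HasCompactSupport f := by
    intro E _ f hf
    apply HasCompactSupport.of_support_subset_isCompact hcs
    intro x hx
    by_contra h
    exact hx (hf x h)
  have hAint : IntegrableOn A (Ioi 0) :=
    (hAc.integrable_of_hasCompactSupport (hKsub A hA0)).integrableOn
  have hBint : IntegrableOn (fun r => W r * ‖u r‖ ^ 2) (Ioi 0) :=
    (hBc.integrable_of_hasCompactSupport (hKsub _ hB0)).integrableOn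
  have hφint : IntegrableOn φ (Ioi 0) :=
    (hφc.integrable_of_hasCompactSupport (hKsub φ hφ0)).integrableOn
  have hLcint : IntegrableOn Lc (Ioi 0) :=
    (hLcc.integrable_of_hasCompactSupport (hKsub Lc hLc0)).integrableOn
  -- the integration by parts: ∫_{Ioi 0} φ = 0
  have hφzero : ∫ r in Ioi (0 : ℝ), φ r = 0 := by
    have hFd : ∀ r ∈ uIcc (0 : ℝ) b, HasDerivAt F (φ r) r := by
      intro r _
      rcases lt_or_ge 0 r with hr | hr
      · exact (hw r hr).mul (hG r)
      · have hev : F =ᶠ[nhds r] (fun _ => 0) := by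
          filter_upwards [Iio_mem_nhds (lt_of_le_of_lt hr hε)] with x hx
          simp [hFdef, huε x hx]
        have h0 : HasDerivAt F 0 r :=
          (hasDerivAt_const r (0 : ℝ)).congr_of_eventuallyEq hev
        have hval : φ r = 0 := by
          simp [hφdef, hGdef, huε r (lt_of_le_of_lt hr hε), hduε r (lt_of_le_of_lt hr hε)]
        rw [hval]
        exact h0
    have hib : ∫ r in (0:ℝ)..b, φ r = F b - F 0 :=
      intervalIntegral.integral_eq_sub_of_hasDerivAt hFd (hφc.intervalIntegrable 0 b)
    have hFb : F b = 0 := by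
      have : u b = 0 := hu0 b (fun h => absurd (hbK h) (lt_irrefl b))
      simp [hFdef, this]
    have hF0 : F 0 = 0 := by
      simp [hFdef, huε 0 hε]
    have heq : ∫ r in Ioi (0 : ℝ), φ r = ∫ r in (0:ℝ)..b, φ r := by
      rw [intervalIntegral.integral_of_le hb0.le]
      rw [setIntegral_eq_integral_of_forall_compl_eq_zero
        (fun r hr => hφ0 r (fun h => hr (hsupp h)))]
      rw [setIntegral_eq_integral_of_forall_compl_eq_zero]
      intro r hr
      apply hφ0
      intro h
      exact hr ⟨hsupp h, le_of_lt (hbK h)⟩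
    rw [heq, hib, hFb, hF0, sub_zero]
  -- main computation
  have hmain : (∫ r in Set.Ioi (0:ℝ), Lc r).re
      = (∫ r in Set.Ioi (0:ℝ), A r) + s * ∫ r in Set.Ioi (0:ℝ), W r * ‖u r‖ ^ 2 := by
    have hre : (∫ r in Set.Ioi (0:ℝ), Lc r).re = ∫ r in Set.Ioi (0:ℝ), (Lc r).re := by
      have h := ContinuousLinearMap.integral_comp_comm Complex.reCLM hLcint
      simp only [Complex.reCLM_apply] at h
      exact h.symm
    rw [hre]
    rw [setIntegral_congr_fun measurableSet_Ioi hL]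
    have h1 : IntegrableOn (fun r => A r + s * (W r * ‖u r‖ ^ 2)) (Ioi 0) := by
      exact hAint.add (hBint.const_mul s)
    have h2 : IntegrableOn (fun r => s * φ r) (Ioi 0) := by
      exact hφint.const_mul s
    have h3 : IntegrableOn (fun r => s * (W r * ‖u r‖ ^ 2)) (Ioi 0) := by
      exact hBint.const_mul s
    have hsub : (∫ r in Set.Ioi (0:ℝ), (A r + s * (W r * ‖u r‖ ^ 2) - s * φ r))
        = (∫ r in Set.Ioi (0:ℝ), (A r + s * (W r * ‖u r‖ ^ 2)))
          - ∫ r in Set.Ioi (0:ℝ), s * φ r := integral_sub h1 h2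
    have hadd : (∫ r in Set.Ioi (0:ℝ), (A r + s * (W r * ‖u r‖ ^ 2)))
        = (∫ r in Set.Ioi (0:ℝ), A r) + ∫ r in Set.Ioi (0:ℝ), s * (W r * ‖u r‖ ^ 2) :=
      integral_add hAint h3
    rw [hsub, hadd, integral_const_mul, integral_const_mul, hφzero]
    ring
  have hBeq : (∫ r in Set.Ioi (0:ℝ),
      r ^ ((n : ℝ) - 2) * (r + δ) ^ (-(2 * s) - 2) *
        (((n : ℝ) - 2 - 2 * s) * r + ((n : ℝ) - 1) * δ) * ‖u r‖ ^ 2)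
      = ∫ r in Set.Ioi (0:ℝ), W r * ‖u r‖ ^ 2 := by
    apply setIntegral_congr_fun measurableSet_Ioi
    intro r _
    simp [hWdef]
  constructor
  · rw [hBeq]
    exact hmain
  · rw [show (∫ r in Set.Ioi (0:ℝ),
        (starRingEnd ℂ) (deriv u r) *
          deriv (fun x => (((x + δ) ^ (-(2 * s)) : ℝ) : ℂ) * u x) r *
          ((r ^ ((n : ℝ) - 1) : ℝ) : ℂ)).re
        = (∫ r in Set.Ioi (0:ℝ), Lc r).re from rfl, hmain]
    have hBnn : 0 ≤ ∫ r in Set.Ioi (0:ℝ), W r * ‖u r‖ ^ 2 := by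
      apply setIntegral_nonneg measurableSet_Ioi
      intro r hr
      have hr' : (0 : ℝ) < r := hr
      have h1 : (0 : ℝ) ≤ (n : ℝ) - 2 - 2 * s := by
        have hn' : (3 : ℝ) ≤ (n : ℝ) := by exact_mod_cast hn
        linarith
      have h2 : (0 : ℝ) ≤ ((n : ℝ) - 2 - 2 * s) * r + ((n : ℝ) - 1) * δ := by
        have hn' : (3 : ℝ) ≤ (n : ℝ) := by exact_mod_cast hn
        have := mul_nonneg h1 hr'.le
        have := mul_nonneg (by linarith : (0:ℝ) ≤ (n:ℝ) - 1) hδ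
        linarith
      have h3 : (0 : ℝ) ≤ r ^ ((n : ℝ) - 2) := Real.rpow_nonneg hr'.le _
      have h4 : (0 : ℝ) ≤ (r + δ) ^ (-(2 * s) - 2) := Real.rpow_nonneg (by positivity) _
      simp only [hWdef]
      have := mul_nonneg (mul_nonneg (mul_nonneg h3 h4) h2) (sq_nonneg ‖u r‖)
      exact this
    nlinarith [mul_nonneg hs0 hBnn]
end

section
/- Fix constants C > 0, ε₀ > 0, γ > 0 and 0 ≤ β < 1. Then there exists C' > 0 such that: for every differentiable function f : (0,ε₀) → [0,∞) satisfying |f'(ε)| ≤ C (f(ε) + 1) ε^{-β} and f(ε) ≤ C ε^{-γ} for all ε ∈ (0,ε₀), one has f(ε) ≤ C' for all ε ∈ (0,ε₀). -/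
/-!
Since `|f'| / (f + 1) ≤ C ε^{-β}` and `ε^{-β}` is integrable at `0` when `β < 1`, the function
`log (f + 1)` has total variation at most `C ε₀^{1-β} / (1 - β)` on `(0, ε₀)`. Hence the values of
`f + 1` on `(0, ε₀)` are all comparable, up to the factor `exp (C ε₀^{1-β} / (1 - β))`, to its
value at the single point `ε₀ / 2`, where the a priori bound `f ≤ C ε^{-γ}` is finite.
-/

open Set

theorem abs_sub_le_sub_of_abs_deriv_le {D : Set ℝ} (hD : Convex ℝ D) {g h g' h' : ℝ → ℝ}
    (hg : ∀ x ∈ D, HasDerivAt g (g' x) x) (hh : ∀ x ∈ D, HasDerivAt h (h' x) x)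
    (hle : ∀ x ∈ D, |g' x| ≤ h' x) {x y : ℝ} (hx : x ∈ D) (hy : y ∈ D) (hxy : x ≤ y) :
    |g y - g x| ≤ h y - h x := by
  have mono : ∀ s : ℝ, |s| ≤ 1 → MonotoneOn (fun z => h z + s * g z) D := fun s hs =>
    monotoneOn_of_hasDerivWithinAt_nonneg (f' := fun z => h' z + s * g' z) hD
      (fun z hz => ((hh z hz).add ((hg z hz).const_mul s)).continuousAt.continuousWithinAt)
      (fun z hz => ((hh z (interior_subset hz)).add
        ((hg z (interior_subset hz)).const_mul s)).hasDerivWithinAt)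
      (fun z hz => by
        have hsg : |s * g' z| ≤ h' z := by
          rw [abs_mul]
          exact (mul_le_of_le_one_left (abs_nonneg _) hs).trans (hle z (interior_subset hz))
        linarith [neg_abs_le (s * g' z)])
  have hplus := mono 1 (by norm_num) hx hy hxy
  have hminus := mono (-1) (by norm_num) hx hy hxy
  simp only [one_mul, neg_one_mul] at hplus hminus
  rw [abs_sub_le_iff]
  constructor <;> linarith

theorem hasDerivAt_rpow_one_sub_div {β x : ℝ} (hβ : β ≠ 1) (hx : x ≠ 0) :
    HasDerivAt (fun y => y ^ (1 - β) / (1 - β)) (x ^ (-β)) x := by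
  have hβ' : 1 - β ≠ 0 := sub_ne_zero.2 hβ.symm
  refine ((Real.hasDerivAt_rpow_const (p := 1 - β) (Or.inl hx)).div_const (1 - β)).congr_deriv ?_
  rw [sub_sub_cancel_left]
  field_simp

theorem abs_log_add_one_sub_le_of_abs_deriv_le {f : ℝ → ℝ} {C ε₀ β : ℝ} (hC : 0 ≤ C)
    (hβ1 : β < 1) (hpos : ∀ ε ∈ Ioo 0 ε₀, 0 ≤ f ε)
    (hdiff : ∀ ε ∈ Ioo 0 ε₀, DifferentiableAt ℝ f ε)
    (hder : ∀ ε ∈ Ioo 0 ε₀, |deriv f ε| ≤ C * (f ε + 1) * ε ^ (-β))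
    {x y : ℝ} (hx : x ∈ Ioo 0 ε₀) (hy : y ∈ Ioo 0 ε₀) :
    |Real.log (f y + 1) - Real.log (f x + 1)| ≤ C * (ε₀ ^ (1 - β) / (1 - β)) := by
  set h : ℝ → ℝ := fun z => C * (z ^ (1 - β) / (1 - β))
  have hf1 : ∀ z ∈ Ioo 0 ε₀, 0 < f z + 1 := fun z hz => by linarith [hpos z hz]
  have hg : ∀ z ∈ Ioo 0 ε₀,
      HasDerivAt (fun z => Real.log (f z + 1)) (deriv f z / (f z + 1)) z := fun z hz =>
    ((hdiff z hz).hasDerivAt.add_const 1).log (hf1 z hz).ne'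
  have hh : ∀ z ∈ Ioo 0 ε₀, HasDerivAt h (C * z ^ (-β)) z := fun z hz =>
    (hasDerivAt_rpow_one_sub_div hβ1.ne hz.1.ne').const_mul C
  have hle : ∀ z ∈ Ioo 0 ε₀, |deriv f z / (f z + 1)| ≤ C * z ^ (-β) := fun z hz => by
    rw [abs_div, abs_of_pos (hf1 z hz), div_le_iff₀ (hf1 z hz)]
    linarith [hder z hz]
  have hrange : ∀ z ∈ Ioo 0 ε₀, 0 ≤ h z ∧ h z ≤ h ε₀ := fun z hz => by
    have h1β : 0 < 1 - β := sub_pos.2 hβ1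
    refine ⟨by have := Real.rpow_nonneg hz.1.le (1 - β); positivity, ?_⟩
    simp only [h]
    gcongr
    exacts [hz.1.le, hz.2.le]
  rcases le_total x y with hxy | hyx
  · linarith [abs_sub_le_sub_of_abs_deriv_le (convex_Ioo 0 ε₀) hg hh hle hx hy hxy,
      hrange x hx, hrange y hy]
  · rw [abs_sub_comm]
    linarith [abs_sub_le_sub_of_abs_deriv_le (convex_Ioo 0 ε₀) hg hh hle hy hx hyx,
      hrange x hx, hrange y hy]

theorem bootstrap_differential_inequality_general (C ε₀ γ β : ℝ)
    (hC : 0 < C) (hε₀ : 0 < ε₀) (hβ1 : β < 1) :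
    ∃ C' > 0, ∀ f : ℝ → ℝ,
      (∀ ε ∈ Set.Ioo (0:ℝ) ε₀, 0 ≤ f ε) →
      (∀ ε ∈ Set.Ioo (0:ℝ) ε₀, DifferentiableAt ℝ f ε) →
      (∀ ε ∈ Set.Ioo (0:ℝ) ε₀, |deriv f ε| ≤ C * (f ε + 1) * ε ^ (-β)) →
      (∀ ε ∈ Set.Ioo (0:ℝ) ε₀, f ε ≤ C * ε ^ (-γ)) →
      ∀ ε ∈ Set.Ioo (0:ℝ) ε₀, f ε ≤ C' := by
  set K := C * (ε₀ ^ (1 - β) / (1 - β))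
  refine ⟨(C * (ε₀ / 2) ^ (-γ) + 1) * Real.exp K, by positivity, ?_⟩
  intro f hpos hdiff hder hbound ε hε
  have hmid : ε₀ / 2 ∈ Ioo 0 ε₀ := ⟨by positivity, by linarith⟩
  have hosc := abs_log_add_one_sub_le_of_abs_deriv_le hC.le hβ1 hpos hdiff hder hmid hε
  have hf1 : ∀ z ∈ Ioo 0 ε₀, 0 < f z + 1 := fun z hz => by linarith [hpos z hz]
  calc f ε ≤ Real.exp (Real.log (f ε + 1)) := by rw [Real.exp_log (hf1 ε hε)]; linarith
    _ ≤ Real.exp (Real.log (f (ε₀ / 2) + 1) + K) := by gcongr; linarith [(abs_le.1 hosc).2]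
    _ = (f (ε₀ / 2) + 1) * Real.exp K := by rw [Real.exp_add, Real.exp_log (hf1 _ hmid)]
    _ ≤ (C * (ε₀ / 2) ^ (-γ) + 1) * Real.exp K := by gcongr; exact hbound _ hmid

theorem bootstrap_differential_inequality (C ε₀ γ β : ℝ)
    (hC : 0 < C) (hε₀ : 0 < ε₀) (hγ : 0 < γ) (hβ0 : 0 ≤ β) (hβ1 : β < 1) :
    ∃ C' > 0, ∀ f : ℝ → ℝ,
      (∀ ε ∈ Set.Ioo (0:ℝ) ε₀, 0 ≤ f ε) →
      (∀ ε ∈ Set.Ioo (0:ℝ) ε₀, DifferentiableAt ℝ f ε) →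
      (∀ ε ∈ Set.Ioo (0:ℝ) ε₀, |deriv f ε| ≤ C * (f ε + 1) * ε ^ (-β)) →
      (∀ ε ∈ Set.Ioo (0:ℝ) ε₀, f ε ≤ C * ε ^ (-γ)) →
      ∀ ε ∈ Set.Ioo (0:ℝ) ε₀, f ε ≤ C' :=
  bootstrap_differential_inequality_general C ε₀ γ β hC hε₀ hβ1
end

section
/- Let H be a complex Hilbert space, T : H → H a bounded invertible linear operator, θ ∈ ℝ and c > 0 such that Re( e^{iθ} ⟨T u, u⟩ ) ≥ c ‖u‖² for all u ∈ H. Then for every bounded operator B on H, ‖T^{-1} B‖ ≤ c^{-1/2} ‖B* T^{-1} B‖^{1/2}. -/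
open ContinuousLinearMap

/-!
Put `S = T⁻¹` and `v = S B u`. Coercivity of `T` at `v` together with `|e^{iθ}| = 1` gives
`c ‖v‖² ≤ |⟨T v, v⟩| = |⟨B u, S B u⟩| = |⟨u, B* S B u⟩| ≤ ‖B* S B‖ ‖u‖²`,
and taking square roots bounds `‖S B‖`.
-/

theorem ContinuousLinearMap.opNorm_le_sqrt_of_sq_le {𝕜 E F : Type*} [NontriviallyNormedField 𝕜]
    [SeminormedAddCommGroup E] [SeminormedAddCommGroup F] [NormedSpace 𝕜 E] [NormedSpace 𝕜 F]
    (A : E →L[𝕜] F) {M : ℝ} (h : ∀ u, ‖A u‖ ^ 2 ≤ M * ‖u‖ ^ 2) : ‖A‖ ≤ √M := by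
  refine A.opNorm_le_bound (Real.sqrt_nonneg M) fun u => ?_
  calc ‖A u‖ = √(‖A u‖ ^ 2) := (Real.sqrt_sq (norm_nonneg _)).symm
    _ ≤ √(M * ‖u‖ ^ 2) := Real.sqrt_le_sqrt (h u)
    _ = √M * ‖u‖ := by rw [Real.sqrt_mul' M (by positivity), Real.sqrt_sq (norm_nonneg u)]

theorem mul_norm_sq_le_norm_inner_of_coercive {H : Type*} [NormedAddCommGroup H]
    [InnerProductSpace ℂ H] (T : H →L[ℂ] H) {θ c : ℝ}
    (hcoer : ∀ u : H, c * ‖u‖ ^ 2 ≤ (Complex.exp (θ * Complex.I) * inner ℂ (T u) u).re) (u : H) :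
    c * ‖u‖ ^ 2 ≤ ‖inner ℂ (T u) u‖ :=
  calc c * ‖u‖ ^ 2 ≤ (Complex.exp (θ * Complex.I) * inner ℂ (T u) u).re := hcoer u
    _ ≤ ‖Complex.exp (θ * Complex.I) * inner ℂ (T u) u‖ := Complex.re_le_norm _
    _ = ‖inner ℂ (T u) u‖ := by rw [norm_mul, Complex.norm_exp_ofReal_mul_I, one_mul]

theorem mul_norm_sq_comp_le_norm_adjoint_comp_comp {𝕜 E H : Type*} [RCLike 𝕜]
    [NormedAddCommGroup E] [InnerProductSpace 𝕜 E] [CompleteSpace E]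
    [NormedAddCommGroup H] [InnerProductSpace 𝕜 H] [CompleteSpace H]
    (S : H →L[𝕜] H) {c : ℝ} (hS : ∀ w, c * ‖S w‖ ^ 2 ≤ ‖inner 𝕜 w (S w)‖)
    (B : E →L[𝕜] H) (u : E) :
    c * ‖S (B u)‖ ^ 2 ≤ ‖(adjoint B).comp (S.comp B)‖ * ‖u‖ ^ 2 := by
  set K := (adjoint B).comp (S.comp B)
  calc c * ‖S (B u)‖ ^ 2 ≤ ‖inner 𝕜 (B u) (S (B u))‖ := hS (B u)
    _ = ‖inner 𝕜 u (K u)‖ := by rw [← adjoint_inner_right]; rfl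
    _ ≤ ‖u‖ * ‖K u‖ := norm_inner_le_norm _ _
    _ ≤ ‖u‖ * (‖K‖ * ‖u‖) := by gcongr; exact K.le_opNorm u
    _ = ‖K‖ * ‖u‖ ^ 2 := by ring

theorem quadratic_estimate_mourre {H : Type*} [NormedAddCommGroup H]
    [InnerProductSpace ℂ H] [CompleteSpace H]
    (T : H ≃L[ℂ] H) (θ c : ℝ) (hc : 0 < c)
    (hcoer : ∀ u : H, c * ‖u‖ ^ 2 ≤
      (Complex.exp (θ * Complex.I) * (inner ℂ ((T : H →L[ℂ] H) u) u : ℂ)).re)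
    (B : H →L[ℂ] H) :
    ‖((T.symm : H →L[ℂ] H).comp B)‖ ≤
      c ^ (-(1/2) : ℝ) *
        ‖(ContinuousLinearMap.adjoint B).comp ((T.symm : H →L[ℂ] H).comp B)‖ ^ ((1:ℝ)/2) := by
  set S : H →L[ℂ] H := (T.symm : H →L[ℂ] H)
  set K := (adjoint B).comp (S.comp B)
  have hS : ∀ w, c * ‖S w‖ ^ 2 ≤ ‖inner ℂ w (S w)‖ := fun w => by
    simpa [S] using mul_norm_sq_le_norm_inner_of_coercive (T : H →L[ℂ] H) hcoer (T.symm w)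
  calc ‖S.comp B‖ ≤ √(‖K‖ / c) := opNorm_le_sqrt_of_sq_le _ fun u => by
        rw [div_mul_eq_mul_div, le_div_iff₀ hc, mul_comm]
        exact mul_norm_sq_comp_le_norm_adjoint_comp_comp S hS B u
    _ = c ^ (-(1/2) : ℝ) * ‖K‖ ^ ((1:ℝ)/2) := by
        rw [Real.sqrt_eq_rpow, Real.div_rpow (norm_nonneg K) hc.le, Real.rpow_neg hc.le,
          div_eq_inv_mul]
end
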